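/- If s : 𝒳 → 𝒮 and t : 𝒴 → 𝒯 are both sufficient, then Wyner's common information is preserved: C_W(p) = C_W(pST). -/

import Mathlib

open Finset

noncomputable section
open scoped Classical

variable {𝒳 𝒴 𝒮 𝒯 : Type*}

/-- Marginal of a joint pmf on the first coordinate. -/
def margX [Fintype 𝒴] (p : 𝒳 × 𝒴 → ℝ) (x : 𝒳) : ℝ := ∑ y, p (x, y)

/-- Marginal of a joint pmf on the second coordinate. -/
def margY [Fintype 𝒳] (p : 𝒳 × 𝒴 → ℝ) (y : 𝒴) : ℝ := ∑ x, p (x, y)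

/-- Distribution of `S = s(X)`. -/
def margS [Fintype 𝒳] [Fintype 𝒴] (p : 𝒳 × 𝒴 → ℝ) (s : 𝒳 → 𝒮) (s0 : 𝒮) : ℝ :=
  ∑ x ∈ Finset.univ.filter (fun x => s x = s0), margX p x

/-- Distribution of `T = t(Y)`. -/
def margT [Fintype 𝒳] [Fintype 𝒴] (p : 𝒳 × 𝒴 → ℝ) (t : 𝒴 → 𝒯) (t0 : 𝒯) : ℝ :=
  ∑ y ∈ Finset.univ.filter (fun y => t y = t0), margY p y

/-- Joint distribution of `(S, T) = (s(X), t(Y))`. -/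
def margST [Fintype 𝒳] [Fintype 𝒴] (p : 𝒳 × 𝒴 → ℝ) (s : 𝒳 → 𝒮) (t : 𝒴 → 𝒯)
    (w : 𝒮 × 𝒯) : ℝ :=
  ∑ x ∈ Finset.univ.filter (fun x => s x = w.1),
    ∑ y ∈ Finset.univ.filter (fun y => t y = w.2), p (x, y)

/-- `q` is a probability mass function. -/
def IsPMF {Z : Type*} [Fintype Z] (q : Z → ℝ) : Prop := (∀ z, 0 ≤ q z) ∧ ∑ z, q z = 1

/-- `s` is a sufficient statistic of `X` for `Y` (Markov chain `X - S - Y`). -/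
def SuffS [Fintype 𝒴] (p : 𝒳 × 𝒴 → ℝ) (s : 𝒳 → 𝒮) : Prop :=
  ∀ x x' y, s x = s x' → p (x, y) * margX p x' = p (x', y) * margX p x

/-- `t` is a sufficient statistic of `Y` for `X` (Markov chain `X - T - Y`). -/
def SuffT [Fintype 𝒳] (p : 𝒳 × 𝒴 → ℝ) (t : 𝒴 → 𝒯) : Prop :=
  ∀ x y y', t y = t y' → p (x, y) * margY p y' = p (x, y') * margY p y

/-- Mutual information of a joint pmf on `A × B`. -/
def mutInfo {A B : Type*} [Fintype A] [Fintype B] (q : A × B → ℝ) : ℝ :=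
  ∑ z : A × B, if 0 < q z then
    q z * Real.log (q z / ((∑ b, q (z.1, b)) * (∑ a, q (a, z.2)))) else 0

/-- Shannon entropy of a pmf on a finite type. -/
def entropy {W : Type*} [Fintype W] (r : W → ℝ) : ℝ :=
  -∑ w, if 0 < r w then r w * Real.log (r w) else 0

/-- Wyner's common information of a joint pmf `m` on `A × B`. -/
def wynerCI {A B : Type*} [Fintype A] [Fintype B] (m : A × B → ℝ) : ℝ :=
  sInf { c | ∃ (n : ℕ) (q : A × B × Fin n → ℝ),
    IsPMF q ∧
    (∀ a b, ∑ w, q (a, b, w) = m (a, b)) ∧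
    (∀ a b w, q (a, b, w) * (∑ a', ∑ b', q (a', b', w)) =
      (∑ b', q (a, b', w)) * (∑ a', q (a', b, w))) ∧
    c = mutInfo (fun z : Fin n × (A × B) => q (z.2.1, z.2.2, z.1)) }

/-- Gács–Körner common information of a joint pmf `m` on `A × B`. -/
def gkCI {A B : Type*} [Fintype A] [Fintype B] (m : A × B → ℝ) : ℝ :=
  sSup { c | ∃ (n : ℕ) (f : A → Fin n) (g : B → Fin n),
    (∑ z : A × B, if f z.1 ≠ g z.2 then m z else 0) = 0 ∧
    c = entropy (fun w : Fin n =>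
      ∑ a ∈ Finset.univ.filter (fun a => f a = w), ∑ b, m (a, b)) }

/-- Information-bottleneck Lagrangian value. -/
def ibL {A B : Type*} [Fintype A] [Fintype B] (m : A × B → ℝ) (β : ℝ) : ℝ :=
  sInf { c | ∃ (n : ℕ) (r : A → Fin n → ℝ),
    (∀ a u, 0 ≤ r a u) ∧ (∀ a, ∑ u, r a u = 1) ∧
    c = mutInfo (fun z : Fin n × A => r z.2 z.1 * ∑ b, m (z.2, b))
        - β * mutInfo (fun z : Fin n × B => ∑ a, r a z.1 * m (a, z.2)) }

/-- Information-bottleneck curve. -/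
def ibCurve {A B : Type*} [Fintype A] [Fintype B] (m : A × B → ℝ) (R : ℝ) : ℝ :=
  sSup { c | ∃ (n : ℕ) (r : A → Fin n → ℝ),
    (∀ a u, 0 ≤ r a u) ∧ (∀ a, ∑ u, r a u = 1) ∧
    mutInfo (fun z : Fin n × A => r z.2 z.1 * ∑ b, m (z.2, b)) ≤ R ∧
    c = mutInfo (fun z : Fin n × B => ∑ a, r a z.1 * m (a, z.2)) }

/-! Sufficiency of `s` and `t` makes `p` factor as `p(x, y) = p(x | s x) p(y | t y) p_ST(s x, t y)`.
Conditional independence given `W` means that the joint law of `(A, B, W)` has the product form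
`u(a, w) v(b, w)`. Pushing a coupling of `(X, Y, W)` forward along `(s, t)` keeps the product form
and, by the log-sum inequality, cannot increase `I(W; X, Y)`. Conversely, a coupling of `(S, T, W)`
lifts to `(X, Y, W)` by drawing `X` and `Y` independently inside the fibres of `s` and `t` with
weights `p(x | s x)` and `p(y | t y)`; this keeps the product form and leaves the mutual information
unchanged. -/

open Real

section MutualInformation

variable {A B : Type*} [Fintype A] [Fintype B]

lemma sub_le_mul_log_div {a b : ℝ} (ha : 0 ≤ a) (hb : 0 ≤ b) (hab : 0 < a → 0 < b) :
    a - b ≤ a * log (a / b) := by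
  rcases ha.eq_or_lt with rfl | ha
  · simpa using hb
  have hb := hab ha
  calc a - b = a * (1 - (a / b)⁻¹) := by field_simp
    _ ≤ a * log (a / b) := by gcongr; exact one_sub_inv_le_log_of_pos (by positivity)

/-- The log-sum inequality. -/
lemma sum_mul_log_div_sum_le {ι : Type*} (s : Finset ι) {a b : ι → ℝ}
    (ha : ∀ i ∈ s, 0 ≤ a i) (hb : ∀ i ∈ s, 0 ≤ b i) (hab : ∀ i ∈ s, 0 < a i → 0 < b i) :
    (∑ i ∈ s, a i) * log ((∑ i ∈ s, a i) / ∑ i ∈ s, b i) ≤ ∑ i ∈ s, a i * log (a i / b i) := by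
  rcases (sum_nonneg ha).eq_or_lt with hA | hA
  · have hzero : ∀ i ∈ s, a i = 0 := (sum_eq_zero_iff_of_nonneg ha).1 hA.symm
    rw [← hA, zero_mul, sum_eq_zero fun i hi => by rw [hzero i hi, zero_mul]]
  obtain ⟨j, hj, haj⟩ := exists_lt_of_sum_lt (f := fun _ => (0 : ℝ)) (g := a) (by simpa using hA)
  set A := ∑ i ∈ s, a i
  set B := ∑ i ∈ s, b i
  have hB : 0 < B := (hab j hj haj).trans_le (single_le_sum hb hj)
  have hterm : ∀ i ∈ s, a i * log (a i / (b i * (A / B))) =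
      a i * log (a i / b i) - a i * log (A / B) := by
    intro i hi
    rcases (ha i hi).eq_or_lt with h | h
    · simp [← h]
    rw [← div_div, log_div (div_pos h (hab i hi h)).ne' (div_pos hA hB).ne']
    ring
  calc A * log (A / B) = A * log (A / B) + (A - B * (A / B)) := by
        rw [mul_div_cancel₀ _ hB.ne']; ring
    _ = A * log (A / B) + ∑ i ∈ s, (a i - b i * (A / B)) := by rw [sum_sub_distrib, ← sum_mul]
    _ ≤ A * log (A / B) + ∑ i ∈ s, a i * log (a i / (b i * (A / B))) := by
        gcongr with i hi
        exact sub_le_mul_log_div (ha i hi) (mul_nonneg (hb i hi) (by positivity))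
          fun h => mul_pos (hab i hi h) (by positivity)
    _ = ∑ i ∈ s, a i * log (a i / b i) := by
        rw [sum_congr rfl hterm, sum_sub_distrib, ← sum_mul]; ring

lemma mutInfo_eq_sum_mul_log {q : A × B → ℝ} (hq : ∀ z, 0 ≤ q z) :
    mutInfo q = ∑ z, q z * log (q z / ((∑ b, q (z.1, b)) * ∑ a, q (a, z.2))) := by
  refine sum_congr rfl fun z _ => ?_
  split_ifs with h
  · rfl
  · rw [le_antisymm (not_lt.1 h) (hq z), zero_mul]

lemma mutInfo_nonneg {q : A × B → ℝ} (hq : IsPMF q) : 0 ≤ mutInfo q := by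
  have hrows : ∑ a, ∑ b, q (a, b) = 1 := by rw [← Fintype.sum_prod_type]; exact hq.2
  have hcols : ∑ b, ∑ a, q (a, b) = 1 := by rw [sum_comm]; exact hrows
  have hprod : ∑ z : A × B, (∑ b, q (z.1, b)) * ∑ a, q (a, z.2) = 1 := by
    rw [Fintype.sum_prod_type]
    dsimp only
    rw [← sum_mul_sum, hrows, hcols, one_mul]
  have := sum_mul_log_div_sum_le univ (fun z _ => hq.1 z)
    (fun z _ => mul_nonneg (sum_nonneg fun _ _ => hq.1 _) (sum_nonneg fun _ _ => hq.1 _))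
    (fun z _ h => mul_pos (h.trans_le (single_le_sum (fun b _ => hq.1 (z.1, b)) (mem_univ z.2)))
      (h.trans_le (single_le_sum (fun a _ => hq.1 (a, z.2)) (mem_univ z.1))))
  rw [hq.2, hprod, div_one, log_one, mul_zero] at this
  rwa [mutInfo_eq_sum_mul_log hq.1]

end MutualInformation

section DataProcessing

variable {A C W : Type*} [Fintype A] [Fintype C] [Fintype W] [DecidableEq C]

lemma mutInfo_map_le {q : W × A → ℝ} (hq : ∀ z, 0 ≤ q z) (φ : A → C) :
    mutInfo (fun z : W × C => ∑ a ∈ univ.filter (fun a => φ a = z.2), q (z.1, a)) ≤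
      mutInfo q := by
  have hrow : ∀ w, ∑ c, ∑ a ∈ univ.filter (fun a => φ a = c), q (w, a) = ∑ a, q (w, a) :=
    fun w => sum_fiberwise univ φ _
  have hcol : ∀ c, ∑ w, ∑ a ∈ univ.filter (fun a => φ a = c), q (w, a) =
      ∑ a ∈ univ.filter (fun a => φ a = c), ∑ w, q (w, a) := fun c => sum_comm
  rw [mutInfo_eq_sum_mul_log fun z => sum_nonneg fun a _ => hq (z.1, a),
    mutInfo_eq_sum_mul_log hq, Fintype.sum_prod_type, Fintype.sum_prod_type]
  refine sum_le_sum fun w _ => ?_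
  rw [← sum_fiberwise univ φ]
  refine sum_le_sum fun c _ => ?_
  dsimp only
  rw [hrow, hcol, mul_sum]
  exact sum_mul_log_div_sum_le _ (fun a _ => hq _)
    (fun a _ => mul_nonneg (sum_nonneg fun _ _ => hq _) (sum_nonneg fun _ _ => hq _))
    fun a _ h => mul_pos (h.trans_le (single_le_sum (fun b _ => hq (w, b)) (mem_univ a)))
      (h.trans_le (single_le_sum (fun w' _ => hq (w', a)) (mem_univ w)))

lemma mutInfo_lift_eq {q : W × C → ℝ} (hq : ∀ z, 0 ≤ q z) (φ : A → C) {α : A → ℝ}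
    (hα : ∀ a, 0 ≤ α a)
    (hfiber : ∀ w c, (∑ a ∈ univ.filter (fun a => φ a = c), α a) * q (w, c) = q (w, c)) :
    mutInfo (fun z : W × A => α z.2 * q (z.1, φ z.2)) = mutInfo q := by
  have hsum : ∀ w (f : C → ℝ), ∑ a, α a * (q (w, φ a) * f (φ a)) = ∑ c, q (w, c) * f c := by
    intro w f
    rw [← sum_fiberwise univ φ]
    refine sum_congr rfl fun c _ => ?_
    calc ∑ a ∈ univ.filter (fun a => φ a = c), α a * (q (w, φ a) * f (φ a))
        = ∑ a ∈ univ.filter (fun a => φ a = c), α a * (q (w, c) * f c) :=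
          sum_congr rfl fun a ha => by rw [(mem_filter.1 ha).2]
      _ = q (w, c) * f c := by rw [← sum_mul, ← mul_assoc, hfiber]
  have hrow : ∀ w, ∑ a, α a * q (w, φ a) = ∑ c, q (w, c) := fun w => by
    simpa using hsum w 1
  rw [mutInfo_eq_sum_mul_log fun z => mul_nonneg (hα _) (hq _), mutInfo_eq_sum_mul_log hq,
    Fintype.sum_prod_type, Fintype.sum_prod_type]
  refine sum_congr rfl fun w _ => ?_
  dsimp only
  rw [← hsum w fun c => log (q (w, c) / ((∑ c', q (w, c')) * ∑ w', q (w', c)))]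
  refine sum_congr rfl fun a _ => ?_
  rw [hrow, ← mul_sum]
  rcases (hα a).eq_or_lt with h | h
  · simp [← h]
  · rw [mul_left_comm _ (α a), mul_div_mul_left _ _ h.ne', mul_assoc]

end DataProcessing

section WynerCoupling

variable {A B W : Type*} [Fintype A] [Fintype B]

def IsCondIndep (q : A × B × W → ℝ) : Prop :=
  ∀ a b w, q (a, b, w) * (∑ a', ∑ b', q (a', b', w)) =
    (∑ b', q (a, b', w)) * (∑ a', q (a', b, w))

def IsWynerCoupling [Fintype W] (m : A × B → ℝ) (q : A × B × W → ℝ) : Prop :=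
  IsPMF q ∧ (∀ a b, ∑ w, q (a, b, w) = m (a, b)) ∧ IsCondIndep q

def wynerInfo [Fintype W] (q : A × B × W → ℝ) : ℝ :=
  mutInfo (fun z : W × (A × B) => q (z.2.1, z.2.2, z.1))

lemma wynerCI_eq_sInf (m : A × B → ℝ) :
    wynerCI m = sInf {c | ∃ (n : ℕ) (q : A × B × Fin n → ℝ),
      IsWynerCoupling m q ∧ c = wynerInfo q} := by
  simp only [wynerCI, IsWynerCoupling, IsCondIndep, wynerInfo, and_assoc]

lemma isCondIndep_of_eq_mul {q : A × B × W → ℝ} {u : A → W → ℝ} {v : B → W → ℝ}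
    (h : ∀ a b w, q (a, b, w) = u a w * v b w) : IsCondIndep q := by
  intro a b w
  simp only [h, ← mul_sum, ← sum_mul]
  ring

lemma IsCondIndep.exists_eq_mul {q : A × B × W → ℝ} (hq : IsCondIndep q)
    (hq0 : ∀ z, 0 ≤ q z) : ∃ (u : A → W → ℝ) (v : B → W → ℝ),
      ∀ a b w, q (a, b, w) = u a w * v b w := by
  refine ⟨fun a w => ∑ b', q (a, b', w),
    fun b w => (∑ a', q (a', b, w)) / ∑ a', ∑ b', q (a', b', w), fun a b w => ?_⟩
  have hW : 0 ≤ ∑ a', ∑ b', q (a', b', w) := sum_nonneg fun a' _ => sum_nonneg fun b' _ => hq0 _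
  dsimp only
  rcases hW.eq_or_lt with h | h
  · rw [← h, div_zero, mul_zero]
    have hrow := (sum_eq_zero_iff_of_nonneg fun a' _ => sum_nonneg fun b' _ => hq0 (a', b', w)).1
      h.symm a (mem_univ a)
    exact (sum_eq_zero_iff_of_nonneg fun b' _ => hq0 (a, b', w)).1 hrow b (mem_univ b)
  · rw [mul_div_assoc', eq_div_iff h.ne', hq]

lemma sum_eq_one_of_marginal [Fintype W] {m : A × B → ℝ} {q : A × B × W → ℝ}
    (hm : ∑ z, m z = 1) (hq : ∀ a b, ∑ w, q (a, b, w) = m (a, b)) : ∑ z, q z = 1 := by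
  simp only [Fintype.sum_prod_type, hq] at hm ⊢
  exact hm

lemma IsWynerCoupling.eq_zero [Fintype W] {m : A × B → ℝ} {q : A × B × W → ℝ}
    (hq : IsWynerCoupling m q) {a : A} {b : B} (hab : m (a, b) = 0) (w : W) : q (a, b, w) = 0 :=
  (sum_eq_zero_iff_of_nonneg fun _ _ => hq.1.1 _).1 ((hq.2.1 a b).trans hab) w (mem_univ w)

lemma wynerInfo_nonneg [Fintype W] {q : A × B × W → ℝ} (hq : IsPMF q) : 0 ≤ wynerInfo q :=
  mutInfo_nonneg ⟨fun _ => hq.1 _,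
    (Equiv.sum_comp ((Equiv.prodComm W (A × B)).trans (Equiv.prodAssoc A B W)) q).trans hq.2⟩

/-- Taking `W = (A, B)` itself makes `A` and `B` deterministic, hence independent, given `W`. -/
lemma exists_isWynerCoupling {m : A × B → ℝ} (hm : IsPMF m) :
    ∃ (n : ℕ) (q : A × B × Fin n → ℝ), IsWynerCoupling m q := by
  let e := Fintype.equivFin (A × B)
  let u : A → Fin _ → ℝ := fun a w => if (e.symm w).1 = a then m (e.symm w) else 0
  let v : B → Fin _ → ℝ := fun b w => if (e.symm w).2 = b then 1 else 0
  have hmarg : ∀ a b, ∑ w, u a w * v b w = m (a, b) := by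
    intro a b
    rw [← e.sum_comp]
    simp [u, v, Fintype.sum_prod_type]
  exact ⟨_, fun z => u z.1 z.2.2 * v z.2.1 z.2.2,
    ⟨fun _ => mul_nonneg (ite_nonneg (hm.1 _) le_rfl) (ite_nonneg zero_le_one le_rfl),
      sum_eq_one_of_marginal hm.2 hmarg⟩,
    hmarg, isCondIndep_of_eq_mul fun _ _ _ => rfl⟩

lemma wynerCI_le_of_forall_exists {A' B' : Type*} [Fintype A'] [Fintype B']
    {m : A × B → ℝ} {m' : A' × B' → ℝ} (hm : IsPMF m)
    (h : ∀ (n : ℕ) (q : A × B × Fin n → ℝ), IsWynerCoupling m q →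
      ∃ q' : A' × B' × Fin n → ℝ, IsWynerCoupling m' q' ∧ wynerInfo q' ≤ wynerInfo q) :
    wynerCI m' ≤ wynerCI m := by
  rw [wynerCI_eq_sInf, wynerCI_eq_sInf]
  obtain ⟨n, q, hq⟩ := exists_isWynerCoupling hm
  refine le_csInf ⟨_, n, q, hq, rfl⟩ ?_
  rintro _ ⟨n, q, hq, rfl⟩
  obtain ⟨q', hq', hle⟩ := h n q hq
  refine (csInf_le ?_ ?_).trans hle
  · exact ⟨0, by rintro _ ⟨n, q, hq, rfl⟩; exact wynerInfo_nonneg hq.1⟩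
  · exact ⟨n, q', hq', rfl⟩

end WynerCoupling

section Statistics

variable [Fintype 𝒳] [Fintype 𝒴] {W : Type*} [Fintype W]

lemma sum_filter_prodMap_eq (s : 𝒳 → 𝒮) (t : 𝒴 → 𝒯) (f : 𝒳 × 𝒴 → ℝ) (c : 𝒮 × 𝒯) :
    ∑ a ∈ univ.filter (fun a => Prod.map s t a = c), f a =
      ∑ x ∈ univ.filter (fun x => s x = c.1), ∑ y ∈ univ.filter (fun y => t y = c.2), f (x, y) := by
  rw [← sum_product]
  congr 1
  ext ⟨x, y⟩
  simp [Prod.ext_iff]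

lemma isPMF_margST [Fintype 𝒮] [Fintype 𝒯] {p : 𝒳 × 𝒴 → ℝ} (hp : IsPMF p)
    (s : 𝒳 → 𝒮) (t : 𝒴 → 𝒯) : IsPMF (margST p s t) := by
  refine ⟨fun c => sum_nonneg fun _ _ => sum_nonneg fun _ _ => hp.1 _, ?_⟩
  simp only [margST, ← sum_filter_prodMap_eq]
  exact (sum_fiberwise univ (Prod.map s t) p).trans hp.2

def couplingMap (s : 𝒳 → 𝒮) (t : 𝒴 → 𝒯) (q : 𝒳 × 𝒴 × W → ℝ) : 𝒮 × 𝒯 × W → ℝ :=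
  fun z => ∑ x ∈ univ.filter (fun x => s x = z.1),
    ∑ y ∈ univ.filter (fun y => t y = z.2.1), q (x, y, z.2.2)

def couplingLift (α : 𝒳 → ℝ) (β : 𝒴 → ℝ) (s : 𝒳 → 𝒮) (t : 𝒴 → 𝒯) (q : 𝒮 × 𝒯 × W → ℝ) :
    𝒳 × 𝒴 × W → ℝ :=
  fun z => α z.1 * β z.2.1 * q (s z.1, t z.2.1, z.2.2)

lemma IsWynerCoupling.map [Fintype 𝒮] [Fintype 𝒯] {p : 𝒳 × 𝒴 → ℝ} {q : 𝒳 × 𝒴 × W → ℝ}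
    (hq : IsWynerCoupling p q) (hp : IsPMF p) (s : 𝒳 → 𝒮) (t : 𝒴 → 𝒯) :
    IsWynerCoupling (margST p s t) (couplingMap s t q) := by
  have hmarg : ∀ s0 t0, ∑ w, couplingMap s t q (s0, t0, w) = margST p s t (s0, t0) := by
    intro s0 t0
    simp only [couplingMap, margST]
    rw [sum_comm]
    refine sum_congr rfl fun x _ => ?_
    rw [sum_comm]
    exact sum_congr rfl fun y _ => hq.2.1 x y
  obtain ⟨u, v, huv⟩ := hq.2.2.exists_eq_mul hq.1.1
  refine ⟨⟨fun _ => sum_nonneg fun _ _ => sum_nonneg fun _ _ => hq.1.1 _,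
    sum_eq_one_of_marginal (isPMF_margST hp s t).2 hmarg⟩, hmarg, ?_⟩
  exact isCondIndep_of_eq_mul (u := fun s0 w => ∑ x ∈ univ.filter (fun x => s x = s0), u x w)
    (v := fun t0 w => ∑ y ∈ univ.filter (fun y => t y = t0), v y w)
    fun s0 t0 w => by simp only [couplingMap, huv, sum_mul_sum]

lemma wynerInfo_couplingMap_le [Fintype 𝒮] [Fintype 𝒯] {q : 𝒳 × 𝒴 × W → ℝ} (hq : ∀ z, 0 ≤ q z)
    (s : 𝒳 → 𝒮) (t : 𝒴 → 𝒯) : wynerInfo (couplingMap s t q) ≤ wynerInfo q := by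
  have := mutInfo_map_le (q := fun z : W × (𝒳 × 𝒴) => q (z.2.1, z.2.2, z.1))
    (fun _ => hq _) (Prod.map s t)
  simp only [sum_filter_prodMap_eq] at this
  exact this

lemma IsWynerCoupling.lift [Fintype 𝒮] [Fintype 𝒯] {p : 𝒳 × 𝒴 → ℝ} (hp : IsPMF p)
    {s : 𝒳 → 𝒮} {t : 𝒴 → 𝒯}
    {α : 𝒳 → ℝ} {β : 𝒴 → ℝ} (hα : ∀ x, 0 ≤ α x) (hβ : ∀ y, 0 ≤ β y)
    (hfac : ∀ x y, p (x, y) = α x * β y * margST p s t (s x, t y))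
    {q : 𝒮 × 𝒯 × W → ℝ} (hq : IsWynerCoupling (margST p s t) q) :
    IsWynerCoupling p (couplingLift α β s t q) := by
  have hmarg : ∀ x y, ∑ w, couplingLift α β s t q (x, y, w) = p (x, y) := fun x y => by
    simp only [couplingLift]
    rw [← mul_sum, hq.2.1, hfac]
  obtain ⟨u, v, huv⟩ := hq.2.2.exists_eq_mul hq.1.1
  refine ⟨⟨fun _ => mul_nonneg (mul_nonneg (hα _) (hβ _)) (hq.1.1 _),
    sum_eq_one_of_marginal hp.2 hmarg⟩, hmarg, ?_⟩
  exact isCondIndep_of_eq_mul (u := fun x w => α x * u (s x) w) (v := fun y w => β y * v (t y) w)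
    fun x y w => by simp only [couplingLift, huv]; ring

lemma wynerInfo_couplingLift [Fintype 𝒮] [Fintype 𝒯] {p : 𝒳 × 𝒴 → ℝ} {s : 𝒳 → 𝒮} {t : 𝒴 → 𝒯}
    {α : 𝒳 → ℝ} {β : 𝒴 → ℝ} (hα0 : ∀ x, 0 ≤ α x) (hβ0 : ∀ y, 0 ≤ β y)
    (hα : ∀ x, ∑ x' ∈ univ.filter (fun x' => s x' = s x), α x' = 1)
    (hβ : ∀ y, ∑ y' ∈ univ.filter (fun y' => t y' = t y), β y' = 1)
    {q : 𝒮 × 𝒯 × W → ℝ} (hq : IsWynerCoupling (margST p s t) q) :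
    wynerInfo (couplingLift α β s t q) = wynerInfo q := by
  refine mutInfo_lift_eq (q := fun z : W × (𝒮 × 𝒯) => q (z.2.1, z.2.2, z.1))
    (fun _ => hq.1.1 _) (Prod.map s t) (α := fun a => α a.1 * β a.2)
    (fun a => mul_nonneg (hα0 a.1) (hβ0 a.2)) ?_
  rintro w ⟨s0, t0⟩
  rw [sum_filter_prodMap_eq, ← sum_mul_sum]
  by_cases hS : ∃ x, s x = s0
  · by_cases hT : ∃ y, t y = t0
    · obtain ⟨x, rfl⟩ := hS
      obtain ⟨y, rfl⟩ := hT
      rw [hα x, hβ y, one_mul, one_mul]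
    · rw [hq.eq_zero ?_ w, mul_zero]
      exact sum_eq_zero fun x _ => sum_eq_zero fun y hy => absurd ⟨y, (mem_filter.1 hy).2⟩ hT
  · rw [hq.eq_zero ?_ w, mul_zero]
    exact sum_eq_zero fun x hx => absurd ⟨x, (mem_filter.1 hx).2⟩ hS

end Statistics

section Sufficiency

variable [Fintype 𝒳] [Fintype 𝒴]

lemma sum_fiber_pos {X S : Type*} [Fintype X] {f : X → ℝ} (hf : ∀ x, 0 < f x) (s : X → S)
    (x : X) : 0 < ∑ x' ∈ univ.filter (fun x' => s x' = s x), f x' :=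
  sum_pos (fun _ _ => hf _) ⟨x, by simp⟩

lemma sum_div_sum_fiber_eq_one {X S : Type*} [Fintype X] {f : X → ℝ} (hf : ∀ x, 0 < f x)
    (s : X → S) (x : X) :
    ∑ x' ∈ univ.filter (fun x' => s x' = s x),
      f x' / ∑ x'' ∈ univ.filter (fun x'' => s x'' = s x'), f x'' = 1 := by
  calc _ = ∑ x' ∈ univ.filter (fun x' => s x' = s x),
        f x' / ∑ x'' ∈ univ.filter (fun x'' => s x'' = s x), f x'' :=
        sum_congr rfl fun x' hx' => by rw [(mem_filter.1 hx').2]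
    _ = 1 := by rw [← sum_div, div_self (sum_fiber_pos hf s x).ne']

lemma SuffS.mul_margS {p : 𝒳 × 𝒴 → ℝ} {s : 𝒳 → 𝒮} (hs : SuffS p s) (x : 𝒳) (y : 𝒴) :
    p (x, y) * margS p s (s x) =
      margX p x * ∑ x' ∈ univ.filter (fun x' => s x' = s x), p (x', y) := by
  rw [margS, mul_sum, mul_sum]
  exact sum_congr rfl fun x' hx' => by rw [hs x x' y (mem_filter.1 hx').2.symm, mul_comm]

lemma SuffT.mul_margT {p : 𝒳 × 𝒴 → ℝ} {t : 𝒴 → 𝒯} (ht : SuffT p t) (x : 𝒳) (y : 𝒴) :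
    p (x, y) * margT p t (t y) =
      margY p y * ∑ y' ∈ univ.filter (fun y' => t y' = t y), p (x, y') := by
  rw [margT, mul_sum, mul_sum]
  exact sum_congr rfl fun y' hy' => by rw [ht x y y' (mem_filter.1 hy').2.symm, mul_comm]

lemma eq_mul_margST {p : 𝒳 × 𝒴 → ℝ} {s : 𝒳 → 𝒮} {t : 𝒴 → 𝒯}
    (hX : ∀ x, 0 < margX p x) (hY : ∀ y, 0 < margY p y) (hs : SuffS p s) (ht : SuffT p t)
    (x : 𝒳) (y : 𝒴) :
    p (x, y) = margX p x / margS p s (s x) * (margY p y / margT p t (t y)) *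
      margST p s t (s x, t y) := by
  have hS : 0 < margS p s (s x) := sum_fiber_pos hX s x
  have hT : 0 < margT p t (t y) := sum_fiber_pos hY t y
  rw [div_mul_div_comm, div_mul_eq_mul_div, eq_div_iff (mul_pos hS hT).ne']
  calc p (x, y) * (margS p s (s x) * margT p t (t y))
      = margX p x * ∑ x' ∈ univ.filter (fun x' => s x' = s x),
          p (x', y) * margT p t (t y) := by
        rw [← mul_assoc, hs.mul_margS, mul_assoc, sum_mul]
    _ = margX p x * margY p y * margST p s t (s x, t y) := by
        simp only [ht.mul_margT, ← mul_sum]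
        rw [mul_assoc]
        rfl

end Sufficiency

theorem wyner_preserved_general
    [Fintype 𝒳] [Fintype 𝒴]
    [Fintype 𝒮] [Fintype 𝒯]
    (p : 𝒳 × 𝒴 → ℝ) (hp : IsPMF p)
    (hX : ∀ x, 0 < margX p x) (hY : ∀ y, 0 < margY p y)
    (s : 𝒳 → 𝒮) (t : 𝒴 → 𝒯)
    (hs : SuffS p s) (ht : SuffT p t) :
    wynerCI p = wynerCI (margST p s t) := by
  have hα0 : ∀ x, 0 ≤ margX p x / margS p s (s x) :=
    fun x => (div_pos (hX x) (sum_fiber_pos hX s x)).le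
  have hβ0 : ∀ y, 0 ≤ margY p y / margT p t (t y) :=
    fun y => (div_pos (hY y) (sum_fiber_pos hY t y)).le
  refine le_antisymm (wynerCI_le_of_forall_exists (isPMF_margST hp s t) fun n q hq => ?_)
    (wynerCI_le_of_forall_exists hp fun n q hq =>
      ⟨_, hq.map hp s t, wynerInfo_couplingMap_le hq.1.1 s t⟩)
  exact ⟨_, hq.lift hp hα0 hβ0 (eq_mul_margST hX hY hs ht),
    (wynerInfo_couplingLift hα0 hβ0 (sum_div_sum_fiber_eq_one hX s)
      (sum_div_sum_fiber_eq_one hY t) hq).le⟩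

/-- Wyner's common information is preserved under sufficient statistics. -/
theorem wyner_preserved
    [Fintype 𝒳] [Nonempty 𝒳] [Fintype 𝒴] [Nonempty 𝒴]
    [Fintype 𝒮] [Nonempty 𝒮] [Fintype 𝒯] [Nonempty 𝒯]
    (p : 𝒳 × 𝒴 → ℝ) (hp : IsPMF p)
    (hX : ∀ x, 0 < margX p x) (hY : ∀ y, 0 < margY p y)
    (s : 𝒳 → 𝒮) (t : 𝒴 → 𝒯)
    (hs : SuffS p s) (ht : SuffT p t) :
    wynerCI p = wynerCI (margST p s t) :=
  wyner_preserved_general p hp hX hY s t hs ht
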